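/- arXiv:2506.13318 — 5 statements merged into one kernel-verified Lean document; each statement's English description precedes it below -/
import Mathlib

section
/- Let (S, L) be a greedoid language and w : L → ℝ an objective function. Assume the following condition: whenever αx ∈ L satisfies w(αx) ≤ w(αy) for every y ∈ Γ(α), and γ = αzβ ∈ L is a basic word (for some letter z and word β), then there exists a basic word δ = αxε ∈ L with w(δ) ≤ w(γ). Then every output of the greedoid greedy algorithm is a basic word of minimum weight; precisely, if γ = x₁x₂⋯x_m ∈ L satisfies Γ(γ) = ∅ and, for every i ∈ {1,…,m}, writing α = x₁⋯x_{i−1}, one has w(αx_i) ≤ w(αy) for all y ∈ Γ(α), then γ is a basic word and w(γ) ≤ w(β) for every basic word β ∈ L. -/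
/-!
Greedy exchange: let `γ` be a greedy output and `β` any basic word. Inductively on `k` we keep a
basic word `δ` with `w δ ≤ w β` that agrees with `γ` on its first `k` letters. If `δ` has the
form `a z b` with `a` the first `k` letters of `γ`, the greedy choice `x` of `γ` after `a` and the
optimality condition produce a basic word `a x ε` that is no heavier than `δ`. At `k = |γ|` the
word `δ` has `γ` as a prefix, and since a word without continuations is basic (exchange axiom),
both have the same length, so `δ = γ`.
-/

namespace Greedoid

variable {α : Type*} {L : Set (List α)} {w : List α → ℝ}

def IsBasicWord (L : Set (List α)) (δ : List α) : Prop :=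
  δ ∈ L ∧ ∀ β ∈ L, β.length ≤ δ.length

def GreedyOptimalityCondition (L : Set (List α)) (w : List α → ℝ) : Prop :=
  ∀ (a : List α) (x : α), a ++ [x] ∈ L →
    (∀ y : α, y ∉ a → a ++ [y] ∈ L → w (a ++ [x]) ≤ w (a ++ [y])) →
    ∀ (z : α) (b : List α), IsBasicWord L (a ++ z :: b) →
      ∃ ε : List α, IsBasicWord L (a ++ x :: ε) ∧ w (a ++ x :: ε) ≤ w (a ++ z :: b)

theorem isBasicWord_of_forall_not_mem_continuation
    (hsimple : ∀ v ∈ L, List.Nodup v)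
    (hexchange : ∀ a ∈ L, ∀ b ∈ L, b.length < a.length → ∃ x ∈ a, b ++ [x] ∈ L)
    {γ : List α} (hγ : γ ∈ L) (hnocont : ∀ x : α, x ∉ γ → γ ++ [x] ∉ L) :
    IsBasicWord L γ := by
  refine ⟨hγ, fun β hβ => ?_⟩
  by_contra! hlt
  obtain ⟨x, -, hx⟩ := hexchange β hβ γ hγ hlt
  have hxγ : x ∉ γ := fun hxγ =>
    List.disjoint_of_nodup_append (hsimple _ hx) hxγ (List.mem_singleton_self x)
  exact hnocont x hxγ hx

theorem IsBasicWord.length_eq {δ γ : List α} (hδ : IsBasicWord L δ) (hγ : IsBasicWord L γ) :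
    δ.length = γ.length :=
  le_antisymm (hγ.2 δ hδ.1) (hδ.2 γ hγ.1)

theorem GreedyOptimalityCondition.exists_basic_le_extending_prefix (hcond : GreedyOptimalityCondition L w)
    {a : List α} {x : α} (hax : a ++ [x] ∈ L)
    (hmin : ∀ y : α, y ∉ a → a ++ [y] ∈ L → w (a ++ [x]) ≤ w (a ++ [y]))
    {δ : List α} (hδ : IsBasicWord L δ) (hprefix : a <+: δ) (hlt : a.length < δ.length) :
    ∃ δ', IsBasicWord L δ' ∧ a ++ [x] <+: δ' ∧ w δ' ≤ w δ := by
  obtain ⟨t, rfl⟩ := hprefix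
  cases t with
  | nil => simp at hlt
  | cons z b =>
    obtain ⟨ε, hε, hεw⟩ := hcond a x hax hmin z b hδ
    exact ⟨a ++ x :: ε, hε, ⟨ε, by simp⟩, hεw⟩

theorem GreedyOptimalityCondition.exists_basic_le_with_greedy_prefix
    (hprefix : ∀ a b : List α, a ++ b ∈ L → a ∈ L) (hcond : GreedyOptimalityCondition L w)
    {γ β : List α} (hγ : IsBasicWord L γ) (hβ : IsBasicWord L β)
    (hgreedy : ∀ k (hk : k < γ.length), ∀ y : α, y ∉ γ.take k → γ.take k ++ [y] ∈ L →
      w (γ.take k ++ [γ[k]]) ≤ w (γ.take k ++ [y])) :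
    ∀ k ≤ γ.length, ∃ δ, IsBasicWord L δ ∧ γ.take k <+: δ ∧ w δ ≤ w β := by
  intro k
  induction k with
  | zero => exact fun _ => ⟨β, hβ, by simp, le_rfl⟩
  | succ k ih =>
    intro hk
    obtain ⟨δ, hδ, hδprefix, hδw⟩ := ih (by omega)
    have htake : γ.take k ++ [γ[k]] = γ.take (k + 1) := (List.take_succ_eq_append_getElem hk).symm
    have hmem : γ.take k ++ [γ[k]] ∈ L :=
      htake ▸ hprefix _ _ ((List.take_append_drop (k + 1) γ).symm ▸ hγ.1)
    have hlt : (γ.take k).length < δ.length := by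
      rw [hδ.length_eq hγ, List.length_take]; omega
    obtain ⟨δ', hδ', hδ'prefix, hδ'w⟩ :=
      hcond.exists_basic_le_extending_prefix hmem (hgreedy k hk) hδ hδprefix hlt
    exact ⟨δ', hδ', htake ▸ hδ'prefix, hδ'w.trans hδw⟩

end Greedoid

theorem greedoid_greedy_algorithm_optimal_general
    {α : Type*}
    (L : Set (List α)) (w : List α → ℝ)
    -- `L` is a simple language: all words consist of pairwise distinct letters
    (hsimple : ∀ v ∈ L, List.Nodup v)
    -- (ii) `L` is closed under taking prefixes
    (hprefix : ∀ a b : List α, a ++ b ∈ L → a ∈ L)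
    -- (iii) the exchange property
    (hexchange : ∀ a ∈ L, ∀ b ∈ L, b.length < a.length → ∃ x ∈ a, b ++ [x] ∈ L)
    -- the greedy-optimality condition
    (hcond : ∀ (a : List α) (x : α), a ++ [x] ∈ L →
      (∀ y : α, y ∉ a → a ++ [y] ∈ L → w (a ++ [x]) ≤ w (a ++ [y])) →
      ∀ (z : α) (b : List α), a ++ z :: b ∈ L →
        (∀ β ∈ L, β.length ≤ (a ++ z :: b).length) →
        ∃ ε : List α, a ++ x :: ε ∈ L ∧
          (∀ β ∈ L, β.length ≤ (a ++ x :: ε).length) ∧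
          w (a ++ x :: ε) ≤ w (a ++ z :: b))
    -- `γ` is a legal output of the greedy algorithm:
    (γ : List α) (hγ : γ ∈ L)
    -- the algorithm stopped: `Γ(γ) = ∅`
    (hnocont : ∀ x : α, x ∉ γ → γ ++ [x] ∉ L)
    -- at every step, the chosen letter minimizes `w` among all continuations
    (hgreedy : ∀ i : Fin γ.length, ∀ y : α,
      y ∉ γ.take i.val → γ.take i.val ++ [y] ∈ L →
      w (γ.take i.val ++ [γ.get i]) ≤ w (γ.take i.val ++ [y])) :
    (∀ β ∈ L, β.length ≤ γ.length) ∧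
    (∀ β ∈ L, (∀ β' ∈ L, β'.length ≤ β.length) → w γ ≤ w β) := by
  have hcond' : Greedoid.GreedyOptimalityCondition L w := fun a x hax hmin z b hzb => by
    obtain ⟨ε, hεL, hεbasic, hεw⟩ := hcond a x hax hmin z b hzb.1 hzb.2
    exact ⟨ε, ⟨hεL, hεbasic⟩, hεw⟩
  have hγbasic : Greedoid.IsBasicWord L γ :=
    Greedoid.isBasicWord_of_forall_not_mem_continuation hsimple hexchange hγ hnocont
  refine ⟨hγbasic.2, fun β hβL hβlen => ?_⟩
  obtain ⟨δ, hδ, hγδ, hδw⟩ := hcond'.exists_basic_le_with_greedy_prefix hprefix hγbasic ⟨hβL, hβlen⟩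
    (fun k hk => hgreedy ⟨k, hk⟩) γ.length le_rfl
  rw [List.take_length] at hγδ
  rwa [hγδ.eq_of_length (hδ.length_eq hγbasic).symm]

/-- (Szeszlér, Theorem 6.) Let `(S, L)` be a greedoid language (the finite
ground set `S` is the finite type `α`) and `w : L → ℝ` an objective function. Assume:
whenever `a ++ [x] ∈ L` satisfies `w (a ++ [x]) ≤ w (a ++ [y])` for every continuation
`y ∈ Γ(a)`, and `a ++ z :: b ∈ L` is a basic word, then there exists a basic word
`a ++ x :: ε ∈ L` with `w (a ++ x :: ε) ≤ w (a ++ z :: b)`. Then every output of the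
greedoid greedy algorithm is a basic word of minimum weight: if `γ ∈ L` has no
continuation and at every step `i` of `γ` the chosen letter minimizes `w` among all
continuations, then `γ` is basic and `w γ ≤ w β` for every basic word `β ∈ L`. -/
theorem greedoid_greedy_algorithm_optimal
    {α : Type*} [Fintype α] [DecidableEq α]
    (L : Set (List α)) (w : List α → ℝ)
    -- `L` is a simple language: all words consist of pairwise distinct letters
    (hsimple : ∀ v ∈ L, List.Nodup v)
    -- (i) the empty word belongs to `L`
    (hempty : ([] : List α) ∈ L)
    -- (ii) `L` is closed under taking prefixes
    (hprefix : ∀ a b : List α, a ++ b ∈ L → a ∈ L)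
    -- (iii) the exchange property
    (hexchange : ∀ a ∈ L, ∀ b ∈ L, b.length < a.length → ∃ x ∈ a, b ++ [x] ∈ L)
    -- the greedy-optimality condition
    (hcond : ∀ (a : List α) (x : α), a ++ [x] ∈ L →
      (∀ y : α, y ∉ a → a ++ [y] ∈ L → w (a ++ [x]) ≤ w (a ++ [y])) →
      ∀ (z : α) (b : List α), a ++ z :: b ∈ L →
        (∀ β ∈ L, β.length ≤ (a ++ z :: b).length) →
        ∃ ε : List α, a ++ x :: ε ∈ L ∧
          (∀ β ∈ L, β.length ≤ (a ++ x :: ε).length) ∧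
          w (a ++ x :: ε) ≤ w (a ++ z :: b))
    -- `γ` is a legal output of the greedy algorithm:
    (γ : List α) (hγ : γ ∈ L)
    -- the algorithm stopped: `Γ(γ) = ∅`
    (hnocont : ∀ x : α, x ∉ γ → γ ++ [x] ∉ L)
    -- at every step, the chosen letter minimizes `w` among all continuations
    (hgreedy : ∀ i : Fin γ.length, ∀ y : α,
      y ∉ γ.take i.val → γ.take i.val ++ [y] ∈ L →
      w (γ.take i.val ++ [γ.get i]) ≤ w (γ.take i.val ++ [y])) :
    (∀ β ∈ L, β.length ≤ γ.length) ∧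
    (∀ β ∈ L, (∀ β' ∈ L, β'.length ≤ β.length) → w γ ≤ w β) :=
  greedoid_greedy_algorithm_optimal_general L w hsimple hprefix hexchange hcond γ hγ hnocont hgreedy
end

section
/- Let (S, L) be a greedoid language and w : L → ℝ. Suppose the greedy-optimality condition is violated, i.e. there exist αx ∈ L with w(αx) ≤ w(αy) for every y ∈ Γ(α), and a basic word γ = αzβ ∈ L, such that no basic word of the form αxε satisfies w(αxε) ≤ w(γ). Then there exists α′ ∈ L such that some legal run of the greedoid greedy algorithm on the contracted greedoid language (S \ α̃′, L/α̃′), where L/α̃′ = {β : α′β ∈ L}, with objective function w̄(β) = w(α′β), outputs a basic word of L/α̃′ that is not of minimum weight with respect to w̄ among basic words of L/α̃′. -/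
/-!
Start the greedy algorithm on the contraction `L / a` by choosing `x`, which is a legal first
step because `x` minimizes the weight over all continuations of `a`, and then continue greedily
until no continuation is left. By the exchange property the resulting maximal word `a ++ x :: d`
is basic, so by the violated condition it is strictly heavier than the basic word `a ++ z :: b`.
-/

section GreedyRun

variable {α : Type*} (L : Set (List α)) (w : List α → ℝ)

/-- Legality of `γ` as a greedy run on the contraction `L / a` with weight `β ↦ w (a ++ β)`. -/
def IsLegalGreedyRun (a γ : List α) : Prop :=
  ∀ i : Fin γ.length, ∀ y : α, y ∉ a → y ∉ γ.take i.val →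
    a ++ (γ.take i.val ++ [y]) ∈ L →
    w (a ++ (γ.take i.val ++ [γ.get i])) ≤ w (a ++ (γ.take i.val ++ [y]))

variable {L w}

theorem IsLegalGreedyRun.cons {a γ : List α} {x : α}
    (hx : ∀ y : α, y ∉ a → a ++ [y] ∈ L → w (a ++ [x]) ≤ w (a ++ [y]))
    (hγ : IsLegalGreedyRun L w (a ++ [x]) γ) : IsLegalGreedyRun L w a (x :: γ) := by
  rintro ⟨_ | j, hj⟩ y hya hyt hyL
  · simpa using hx y hya (by simpa using hyL)
  · simp only [List.take_succ_cons, List.mem_cons, not_or] at hyt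
    have := hγ ⟨j, by simpa using hj⟩ y (by simp [hya, hyt.1]) hyt.2 (by simpa using hyL)
    simpa using this

open Classical in
theorem exists_legal_greedy_run [Fintype α] {N : ℕ} (hbound : ∀ v ∈ L, v.length ≤ N)
    (a : List α) (ha : a ∈ L) :
    ∃ γ : List α, a ++ γ ∈ L ∧ (∀ y : α, y ∉ a → y ∉ γ → a ++ (γ ++ [y]) ∉ L) ∧
      IsLegalGreedyRun L w a γ := by
  by_cases hcont : ∃ y : α, y ∉ a ∧ a ++ [y] ∈ L
  · obtain ⟨u, hu, hmin⟩ := (Finset.univ.filter fun y => y ∉ a ∧ a ++ [y] ∈ L).exists_min_image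
      (fun y => w (a ++ [y])) (by simpa [Finset.Nonempty] using hcont)
    simp only [Finset.mem_filter, Finset.mem_univ, true_and] at hu hmin
    have hlen : (a ++ [u]).length ≤ N := hbound _ hu.2
    obtain ⟨γ, hγL, hstop, hrun⟩ := exists_legal_greedy_run hbound (a ++ [u]) hu.2
    refine ⟨u :: γ, by simpa using hγL, fun y hya hyγ => ?_,
      hrun.cons fun y hya hyL => hmin y ⟨hya, hyL⟩⟩
    simp only [List.mem_cons, not_or] at hyγ
    simpa using hstop y (by simp [hya, hyγ.1]) hyγ.2
  · push Not at hcont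
    exact ⟨[], by simpa using ha, fun y hya _ => by simpa using hcont y hya,
      fun i => i.elim0⟩
termination_by N + 1 - a.length
decreasing_by simp only [List.length_append, List.length_singleton] at hlen ⊢; omega

theorem length_le_of_forall_append_notMem
    (hsimple : ∀ v ∈ L, v.Nodup)
    (hexchange : ∀ a ∈ L, ∀ b ∈ L, b.length < a.length → ∃ x ∈ a, b ++ [x] ∈ L)
    {c : List α} (hc : c ∈ L) (hstop : ∀ y : α, y ∉ c → c ++ [y] ∉ L) :
    ∀ β ∈ L, β.length ≤ c.length := by
  intro β hβ
  by_contra! hlt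
  obtain ⟨y, -, hy⟩ := hexchange β hβ c hc hlt
  exact hstop y (fun hyc => (List.nodup_append.mp (hsimple _ hy)).2.2 y hyc y (by simp) rfl) hy

end GreedyRun

theorem greedoid_greedy_condition_violation_suboptimal_on_contraction_general
    {α : Type*} [Fintype α]
    (L : Set (List α)) (w : List α → ℝ)
    -- `L` is a simple language: all words consist of pairwise distinct letters
    (hsimple : ∀ v ∈ L, List.Nodup v)
    -- (ii) `L` is closed under taking prefixes
    (hprefix : ∀ a b : List α, a ++ b ∈ L → a ∈ L)
    -- (iii) the exchange property
    (hexchange : ∀ a ∈ L, ∀ b ∈ L, b.length < a.length → ∃ x ∈ a, b ++ [x] ∈ L)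
    -- the greedy-optimality condition is violated:
    (hviol : ∃ (a : List α) (x : α), a ++ [x] ∈ L ∧
      (∀ y : α, y ∉ a → a ++ [y] ∈ L → w (a ++ [x]) ≤ w (a ++ [y])) ∧
      ∃ (z : α) (b : List α), a ++ z :: b ∈ L ∧
        (∀ β ∈ L, β.length ≤ (a ++ z :: b).length) ∧
        (∀ ε : List α, a ++ x :: ε ∈ L →
          (∀ β ∈ L, β.length ≤ (a ++ x :: ε).length) →
          ¬ w (a ++ x :: ε) ≤ w (a ++ z :: b))) :
    ∃ a' ∈ L, ∃ γ : List α,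
      -- `γ` belongs to the contraction `L / a'`
      a' ++ γ ∈ L ∧
      -- the run stopped: `γ` has no continuation in `L / a'`
      (∀ x : α, x ∉ a' → x ∉ γ → a' ++ (γ ++ [x]) ∉ L) ∧
      -- the run is legal: each chosen letter minimizes `w̄` among continuations
      (∀ i : Fin γ.length, ∀ y : α, y ∉ a' → y ∉ γ.take i.val →
        a' ++ (γ.take i.val ++ [y]) ∈ L →
        w (a' ++ (γ.take i.val ++ [γ.get i])) ≤ w (a' ++ (γ.take i.val ++ [y]))) ∧
      -- the output `γ` is a basic word of `L / a'`
      (∀ β : List α, a' ++ β ∈ L → β.length ≤ γ.length) ∧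
      -- ... but it is not of minimum weight among basic words of `L / a'`
      (∃ β : List α, a' ++ β ∈ L ∧
        (∀ β' : List α, a' ++ β' ∈ L → β'.length ≤ β.length) ∧
        w (a' ++ β) < w (a' ++ γ)) := by
  obtain ⟨a, x, hax, hxmin, z, b, hzb, hzb_basic, hheavier⟩ := hviol
  obtain ⟨d, hdL, hdstop, hdrun⟩ := exists_legal_greedy_run (w := w) hzb_basic (a ++ [x]) hax
  have hγL : a ++ x :: d ∈ L := by simpa using hdL
  have hγstop : ∀ y : α, y ∉ a → y ∉ x :: d → a ++ (x :: d ++ [y]) ∉ L := by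
    intro y hya hyγ
    simp only [List.mem_cons, not_or] at hyγ
    simpa using hdstop y (by simp [hya, hyγ.1]) hyγ.2
  have hγ_basic : ∀ β ∈ L, β.length ≤ (a ++ x :: d).length :=
    length_le_of_forall_append_notMem hsimple hexchange hγL fun y hy => by
      simp only [List.mem_append, List.mem_cons, not_or] at hy
      simpa using hγstop y hy.1 (by simp [hy.2.1, hy.2.2])
  refine ⟨a, hprefix a [x] hax, x :: d, hγL, hγstop, hdrun.cons hxmin,
    fun β hβ => by simpa using hγ_basic _ hβ, z :: b, hzb,
    fun β hβ => by simpa using hzb_basic _ hβ, ?_⟩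
  exact not_le.mp (hheavier d hγL hγ_basic)

/-- (Szeszlér, Corollary 1.) Let `(S, L)` be a greedoid language (the
finite ground set `S` is the finite type `α`) and `w : L → ℝ`. Suppose the greedy-optimality
condition is violated: there exist `a ++ [x] ∈ L` with `w (a ++ [x]) ≤ w (a ++ [y])` for
every continuation `y ∈ Γ(a)`, and a basic word `a ++ z :: b ∈ L`, such that no basic word
of the form `a ++ x :: ε` satisfies `w (a ++ x :: ε) ≤ w (a ++ z :: b)`. Then there exists
`a' ∈ L` such that some legal run of the greedy algorithm on the contraction
`L / a' = {β : a' ++ β ∈ L}` (over ground set `S \ ã'`), with objective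
`w̄ β = w (a' ++ β)`, outputs a basic word of `L / a'` that is not of minimum weight
among basic words of `L / a'`. -/
theorem greedoid_greedy_condition_violation_suboptimal_on_contraction
    {α : Type*} [Fintype α] [DecidableEq α]
    (L : Set (List α)) (w : List α → ℝ)
    -- `L` is a simple language: all words consist of pairwise distinct letters
    (hsimple : ∀ v ∈ L, List.Nodup v)
    -- (i) the empty word belongs to `L`
    (hempty : ([] : List α) ∈ L)
    -- (ii) `L` is closed under taking prefixes
    (hprefix : ∀ a b : List α, a ++ b ∈ L → a ∈ L)
    -- (iii) the exchange property
    (hexchange : ∀ a ∈ L, ∀ b ∈ L, b.length < a.length → ∃ x ∈ a, b ++ [x] ∈ L)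
    -- the greedy-optimality condition is violated:
    (hviol : ∃ (a : List α) (x : α), a ++ [x] ∈ L ∧
      (∀ y : α, y ∉ a → a ++ [y] ∈ L → w (a ++ [x]) ≤ w (a ++ [y])) ∧
      ∃ (z : α) (b : List α), a ++ z :: b ∈ L ∧
        (∀ β ∈ L, β.length ≤ (a ++ z :: b).length) ∧
        (∀ ε : List α, a ++ x :: ε ∈ L →
          (∀ β ∈ L, β.length ≤ (a ++ x :: ε).length) →
          ¬ w (a ++ x :: ε) ≤ w (a ++ z :: b))) :
    ∃ a' ∈ L, ∃ γ : List α,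
      -- `γ` belongs to the contraction `L / a'`
      a' ++ γ ∈ L ∧
      -- the run stopped: `γ` has no continuation in `L / a'`
      (∀ x : α, x ∉ a' → x ∉ γ → a' ++ (γ ++ [x]) ∉ L) ∧
      -- the run is legal: each chosen letter minimizes `w̄` among continuations
      (∀ i : Fin γ.length, ∀ y : α, y ∉ a' → y ∉ γ.take i.val →
        a' ++ (γ.take i.val ++ [y]) ∈ L →
        w (a' ++ (γ.take i.val ++ [γ.get i])) ≤ w (a' ++ (γ.take i.val ++ [y]))) ∧
      -- the output `γ` is a basic word of `L / a'`
      (∀ β : List α, a' ++ β ∈ L → β.length ≤ γ.length) ∧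
      -- ... but it is not of minimum weight among basic words of `L / a'`
      (∃ β : List α, a' ++ β ∈ L ∧
        (∀ β' : List α, a' ++ β' ∈ L → β'.length ≤ β.length) ∧
        w (a' ++ β) < w (a' ++ γ)) :=
  greedoid_greedy_condition_violation_suboptimal_on_contraction_general L w hsimple hprefix
    hexchange hviol
end

section
/- Let (S, L) be a greedoid language. Then the family F = {α̃ : α ∈ L} of letter-sets of feasible words, together with the ground set S, forms a greedoid: ∅ ∈ F, and for all X, Y ∈ F with |X| < |Y| there exists y ∈ Y \ X such that X ∪ {y} ∈ F. -/
/-! For simple words the letter set has as many elements as the word has letters, so a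
comparison of letter sets is one of lengths and the exchange axiom extends the shorter word `a`
by a letter `x` of the longer one. Simplicity of `a ++ [x]` gives `x ∉ a`, and the letter set
of `a ++ [x]` is `insert x a.toFinset`. -/

namespace List

theorem notMem_of_nodup_append_singleton {α : Type*} {a : List α} {x : α} (h : (a ++ [x]).Nodup) :
    x ∉ a :=
  ((nodup_concat a x).1 (concat_eq_append ▸ h)).1

theorem toFinset_append_singleton {α : Type*} [DecidableEq α] (a : List α) (x : α) :
    (a ++ [x]).toFinset = insert x a.toFinset := by
  ext
  simp

end List

open List in
theorem exists_insert_letterSet_of_exchange {α : Type*} [DecidableEq α] {L : Set (List α)}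
    (hsimple : ∀ v ∈ L, v.Nodup)
    (hexchange : ∀ a ∈ L, ∀ b ∈ L, b.length < a.length → ∃ x ∈ a, b ++ [x] ∈ L)
    {a b : List α} (ha : a ∈ L) (hb : b ∈ L) (hcard : a.toFinset.card < b.toFinset.card) :
    ∃ y ∈ b.toFinset \ a.toFinset, ∃ c ∈ L, c.toFinset = insert y a.toFinset := by
  rw [toFinset_card_of_nodup (hsimple a ha), toFinset_card_of_nodup (hsimple b hb)] at hcard
  obtain ⟨x, hxb, hax⟩ := hexchange b hb a ha hcard
  have hxa : x ∉ a := notMem_of_nodup_append_singleton (hsimple _ hax)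
  exact ⟨x, by simp [hxb, hxa], a ++ [x], hax, toFinset_append_singleton a x⟩

theorem greedoid_language_letter_sets_form_greedoid_general
    {α : Type*} [DecidableEq α]
    (L : Set (List α))
    -- `L` is a simple language: all words consist of pairwise distinct letters
    (hsimple : ∀ v ∈ L, List.Nodup v)
    -- (i) the empty word belongs to `L`
    (hempty : ([] : List α) ∈ L)
    -- (iii) the exchange property
    (hexchange : ∀ a ∈ L, ∀ b ∈ L, b.length < a.length → ∃ x ∈ a, b ++ [x] ∈ L) :
    (∅ : Finset α) ∈ {s : Finset α | ∃ a ∈ L, a.toFinset = s} ∧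
    ∀ X ∈ {s : Finset α | ∃ a ∈ L, a.toFinset = s},
      ∀ Y ∈ {s : Finset α | ∃ a ∈ L, a.toFinset = s},
        X.card < Y.card →
          ∃ y ∈ Y \ X, insert y X ∈ {s : Finset α | ∃ a ∈ L, a.toFinset = s} := by
  refine ⟨⟨[], hempty, rfl⟩, ?_⟩
  rintro X ⟨a, ha, rfl⟩ Y ⟨b, hb, rfl⟩ hcard
  exact exists_insert_letterSet_of_exchange hsimple hexchange ha hb hcard

/-- Let `(S, L)` be a greedoid language (the finite ground set `S` is the
finite type `α`). Then the family `F = {α̃ : α ∈ L}` of letter-sets of feasible words,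
together with the ground set `S`, forms a greedoid: `∅ ∈ F`, and for all `X, Y ∈ F` with
`|X| < |Y|` there exists `y ∈ Y \ X` such that `X ∪ {y} ∈ F`. -/
theorem greedoid_language_letter_sets_form_greedoid
    {α : Type*} [Fintype α] [DecidableEq α]
    (L : Set (List α))
    -- `L` is a simple language: all words consist of pairwise distinct letters
    (hsimple : ∀ v ∈ L, List.Nodup v)
    -- (i) the empty word belongs to `L`
    (hempty : ([] : List α) ∈ L)
    -- (ii) `L` is closed under taking prefixes
    (hprefix : ∀ a b : List α, a ++ b ∈ L → a ∈ L)
    -- (iii) the exchange property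
    (hexchange : ∀ a ∈ L, ∀ b ∈ L, b.length < a.length → ∃ x ∈ a, b ++ [x] ∈ L) :
    (∅ : Finset α) ∈ {s : Finset α | ∃ a ∈ L, a.toFinset = s} ∧
    ∀ X ∈ {s : Finset α | ∃ a ∈ L, a.toFinset = s},
      ∀ Y ∈ {s : Finset α | ∃ a ∈ L, a.toFinset = s},
        X.card < Y.card →
          ∃ y ∈ Y \ X, insert y X ∈ {s : Finset α | ∃ a ∈ L, a.toFinset = s} :=
  greedoid_language_letter_sets_form_greedoid_general L hsimple hempty hexchange
end

section
/- Correctness of the two-dimensional inverse Rosenblatt transform: let μ be a probability measure on ℝ × ℝ with first marginal ν, let F_ν(x) = ν((−∞, x]) be the cumulative distribution function of ν with generalized inverse F_ν^{-1}(p) = inf{x ∈ ℝ : p ≤ F_ν(x)}, and let G(t | x) denote the conditional cumulative distribution function of the second coordinate of μ given that the first coordinate equals x (a regular conditional CDF of μ with respect to its first marginal), with generalized inverse G^{-1}(p | x) = inf{t ∈ ℝ : p ≤ G(t | x)}. If V₀ and V₁ are independent random variables, each uniformly distributed on [0, 1], then the random vector (X₀, X₁) defined by X₀ = F_ν^{-1}(V₀)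 and X₁ = G^{-1}(V₁ | X₀) has law μ. -/
/-!
On `(0, 1)` the generalized inverse `q` of a CDF `F` satisfies `q p ≤ a ↔ p ≤ F a`, by right
continuity of `F`; hence the image of the uniform law under `q` has CDF `F`. Applied fibrewise
to the conditional CDFs `G(· | x)`, the map `(x, p) ↦ (x, G⁻¹(p | x))` sends `μ.fst ⊗ uniform`
to `μ`, as both give `s × (-∞, b]` the mass `∫_s G(b | x) dμ.fst`. By independence `(V₀, V₁)` has
law `uniform ⊗ uniform`, and `F⁻¹` turns its first factor into `μ.fst`.
-/

open MeasureTheory ProbabilityTheory Set Filter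
open scoped Topology

/-- Generalized inverse of the cumulative distribution function of a measure `ν` on `ℝ`:
`F_ν⁻¹(p) = inf {x : p ≤ F_ν x}` where `F_ν x = ν (Iic x)`. -/
noncomputable def cdfInv (ν : Measure ℝ) (p : ℝ) : ℝ :=
  sInf {x : ℝ | p ≤ (ν (Set.Iic x)).toReal}

/-- Generalized inverse, in its first argument, of the regular conditional CDF
`G(t | x) = condCDF μ x t` of the second coordinate of `μ` given the first: for
`p ∈ (0,1)`, `G⁻¹(p | x) = inf {t : p ≤ G(t | x)}`. -/
noncomputable def condCDFInv (μ : Measure (ℝ × ℝ)) (x p : ℝ) : ℝ :=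
  sInf {t : ℝ | p ≤ condCDF μ x t}

theorem ae_restrict_Icc_mem_Ioo (a b : ℝ) : ∀ᵐ x ∂volume.restrict (Icc a b), x ∈ Ioo a b := by
  rw [← Measure.restrict_congr_set Ioo_ae_eq_Icc]
  exact ae_restrict_mem measurableSet_Ioo

namespace StieltjesFunction

/-- Set to `0` outside `(0, 1)`, where the infimum is a junk value, to make it measurable. -/
noncomputable def quantile (f : StieltjesFunction ℝ) (p : ℝ) : ℝ :=
  if p ∈ Ioo 0 1 then sInf {x | p ≤ f x} else 0

variable {f : StieltjesFunction ℝ}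

theorem quantile_le_iff (hf_bot : Tendsto f atBot (𝓝 0)) (hf_top : Tendsto f atTop (𝓝 1))
    {p : ℝ} (hp : p ∈ Ioo 0 1) (a : ℝ) : f.quantile p ≤ a ↔ p ≤ f a := by
  rw [quantile, if_pos hp]
  have hne : {x | p ≤ f x}.Nonempty := (hf_top.eventually (eventually_ge_nhds hp.2)).exists
  have hbdd : BddBelow {x | p ≤ f x} := by
    obtain ⟨x₀, hx₀⟩ := (hf_bot.eventually (eventually_lt_nhds hp.1)).exists
    exact ⟨x₀, fun y hy => le_of_not_ge fun hyx => (hy.trans (f.mono hyx)).not_gt hx₀⟩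
  refine ⟨fun h => ?_, fun h => csInf_le hbdd h⟩
  suffices p ≤ f (sInf {x | p ≤ f x}) from this.trans (f.mono h)
  have hgt : ∀ y ∈ Ioi (sInf {x | p ≤ f x}), p ≤ f y := fun y hy => by
    obtain ⟨x, hx, hxy⟩ := (csInf_lt_iff hbdd hne).mp hy
    exact hx.trans (f.mono hxy.le)
  exact ge_of_tendsto ((f.right_continuous _).tendsto.mono_left
    (nhdsWithin_mono _ Ioi_subset_Ici_self)) (eventually_nhdsWithin_of_forall hgt)

theorem _root_.Measurable.quantile {α : Type*} [MeasurableSpace α] {g : α → ℝ} (hg : Measurable g)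
    {f : α → StieltjesFunction ℝ} (hf : ∀ t, Measurable fun x => f x t)
    (hf_bot : ∀ x, Tendsto (f x) atBot (𝓝 0)) (hf_top : ∀ x, Tendsto (f x) atTop (𝓝 1)) :
    Measurable fun x => (f x).quantile (g x) := by
  refine measurable_of_Iic fun b => ?_
  have : (fun x => (f x).quantile (g x)) ⁻¹' Iic b =
      {x | g x ∈ Ioo 0 1 ∧ g x ≤ f x b} ∪ {x | g x ∉ Ioo 0 1 ∧ 0 ≤ b} := by
    ext x
    by_cases hx : g x ∈ Ioo 0 1
    · simp only [mem_preimage, mem_Iic, mem_union, mem_ofPred_eq, hx, true_and,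
        not_true_eq_false, false_and, or_false, quantile_le_iff (hf_bot x) (hf_top x) hx]
    · rw [mem_preimage, StieltjesFunction.quantile, if_neg hx]
      simp only [mem_Iic, mem_union, mem_ofPred_eq, hx, false_and, not_false_eq_true, true_and,
        false_or]
  rw [this]
  exact ((hg measurableSet_Ioo).inter (measurableSet_le hg (hf b))).union
    ((hg measurableSet_Ioo).compl.inter (.const _))

theorem measurable_quantile (hf_bot : Tendsto f atBot (𝓝 0)) (hf_top : Tendsto f atTop (𝓝 1)) :
    Measurable f.quantile :=
  measurable_id.quantile (f := fun _ => f) (fun _ => measurable_const) (fun _ => hf_bot)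
    (fun _ => hf_top)

theorem map_quantile (hf_bot : Tendsto f atBot (𝓝 0)) (hf_top : Tendsto f atTop (𝓝 1)) :
    (volume.restrict (Icc 0 1)).map f.quantile = f.measure := by
  have hq := measurable_quantile hf_bot hf_top
  have : IsProbabilityMeasure f.measure := f.isProbabilityMeasure hf_bot hf_top
  refine (Measure.ext_of_Iic _ _ fun b => ?_).symm
  have hpre : f.quantile ⁻¹' Iic b =ᵐ[volume.restrict (Icc 0 1)] Iic (f b) := by
    filter_upwards [ae_restrict_Icc_mem_Ioo 0 1] with p hp
    exact propext (quantile_le_iff hf_bot hf_top hp b)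
  have hfb : f b ∈ Icc 0 1 := ⟨f.mono.le_of_tendsto hf_bot b, f.mono.ge_of_tendsto hf_top b⟩
  rw [Measure.map_apply hq measurableSet_Iic, measure_congr hpre, f.measure_Iic hf_bot, sub_zero,
    ← Measure.restrict_congr_set Ioc_ae_eq_Icc, Measure.restrict_apply measurableSet_Iic,
    Iic_inter_Ioc_of_le hfb.2, Real.volume_Ioc, sub_zero]

end StieltjesFunction

theorem MeasureTheory.Measure.ext_of_prod_Iic {α : Type*} [MeasurableSpace α]
    {ρ₁ ρ₂ : Measure (α × ℝ)} [IsFiniteMeasure ρ₁]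
    (h : ∀ s, MeasurableSet s → ∀ b, ρ₁ (s ×ˢ Iic b) = ρ₂ (s ×ˢ Iic b)) : ρ₁ = ρ₂ := by
  have hIic : IsCountablySpanning (range (Iic : ℝ → Set ℝ)) :=
    ⟨fun n : ℕ => Iic (n : ℝ), fun _ => mem_range_self _,
      eq_univ_of_forall fun x => mem_iUnion.2 ⟨⌈x⌉₊, Nat.le_ceil x⟩⟩
  have hgen : (inferInstance : MeasurableSpace (α × ℝ)) =
      .generateFrom (image2 (· ×ˢ ·) {s : Set α | MeasurableSet s} (range Iic)) :=
    (generateFrom_eq_prod MeasurableSpace.generateFrom_measurableSet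
      (by rw [← borel_eq_generateFrom_Iic, ← BorelSpace.measurable_eq (α := ℝ)])
      isCountablySpanning_measurableSet hIic).symm
  obtain ⟨B, hBC, hB⟩ := (isCountablySpanning_measurableSet (α := α)).prod hIic
  refine Measure.ext_of_generateFrom_of_iUnion _ B hgen
    (MeasurableSpace.isPiSystem_measurableSet.prod isPiSystem_Iic) hB hBC
    (fun _ => measure_ne_top _ _) ?_
  rintro _ ⟨s, hs, _, ⟨b, rfl⟩, rfl⟩
  exact h s hs b

section CondQuantile

variable {α : Type*} [MeasurableSpace α] (ρ : Measure (α × ℝ))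

noncomputable def condQuantileMap (z : α × ℝ) : α × ℝ :=
  (z.1, (condCDF ρ z.1).quantile z.2)

theorem measurable_condQuantileMap : Measurable (condQuantileMap ρ) :=
  measurable_fst.prodMk <| measurable_snd.quantile
    (fun t => (measurable_condCDF ρ t).comp measurable_fst)
    (fun z => tendsto_condCDF_atBot ρ z.1) (fun z => tendsto_condCDF_atTop ρ z.1)

theorem map_prod_condQuantileMap [IsFiniteMeasure ρ] :
    (ρ.fst.prod (volume.restrict (Icc 0 1))).map (condQuantileMap ρ) = ρ := by
  have hΨ := measurable_condQuantileMap ρ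
  refine (Measure.ext_of_prod_Iic fun s hs b => ?_).symm
  have hsb : MeasurableSet (s ×ˢ Iic b) := hs.prod measurableSet_Iic
  rw [Measure.map_apply hΨ hsb, Measure.prod_apply (hΨ hsb), ← setLIntegral_condCDF ρ b hs,
    ← lintegral_indicator hs]
  refine lintegral_congr fun x => ?_
  by_cases hx : x ∈ s
  · have hsec : Prod.mk x ⁻¹' (condQuantileMap ρ ⁻¹' (s ×ˢ Iic b)) =
        (condCDF ρ x).quantile ⁻¹' Iic b := by
      ext v
      simp [condQuantileMap, hx]
    have hbot := tendsto_condCDF_atBot ρ x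
    have htop := tendsto_condCDF_atTop ρ x
    rw [hsec, indicator_of_mem hx, ← measure_condCDF_Iic,
      ← StieltjesFunction.map_quantile hbot htop,
      Measure.map_apply (StieltjesFunction.measurable_quantile hbot htop) measurableSet_Iic]
  · have hsec : Prod.mk x ⁻¹' (condQuantileMap ρ ⁻¹' (s ×ˢ Iic b)) = ∅ := by
      ext v
      simp [condQuantileMap, hx]
    rw [hsec, indicator_of_notMem hx, measure_empty]

end CondQuantile

theorem cdfInv_eq_quantile (ν : Measure ℝ) [IsProbabilityMeasure ν] {p : ℝ} (hp : p ∈ Ioo 0 1) :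
    cdfInv ν p = (cdf ν).quantile p := by
  simp only [cdfInv, StieltjesFunction.quantile, if_pos hp, cdf_eq_real, measureReal_def]

theorem condCDFInv_eq_quantile (μ : Measure (ℝ × ℝ)) (x : ℝ) {p : ℝ} (hp : p ∈ Ioo 0 1) :
    condCDFInv μ x p = (condCDF μ x).quantile p := by
  rw [condCDFInv, StieltjesFunction.quantile, if_pos hp]

/-- Correctness of the two-dimensional inverse Rosenblatt transform:
let `μ` be a probability measure on `ℝ × ℝ` with first marginal `ν = μ.fst`, let
`F_ν⁻¹` be the generalized inverse of the CDF of `ν`, and let `G⁻¹(· | x)` be the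
generalized inverse of the regular conditional CDF `G(t | x) = condCDF μ x t`.
If `V₀` and `V₁` are independent random variables, each uniformly distributed on
`[0, 1]`, then `(X₀, X₁)` with `X₀ = F_ν⁻¹(V₀)` and `X₁ = G⁻¹(V₁ | X₀)` has law `μ`. -/
theorem inverse_rosenblatt_two_dim
    {Ω : Type*} [MeasurableSpace Ω] (P : Measure Ω) [IsProbabilityMeasure P]
    (μ : Measure (ℝ × ℝ)) [IsProbabilityMeasure μ]
    (V₀ V₁ : Ω → ℝ) (hV₀ : Measurable V₀) (hV₁ : Measurable V₁)
    (hindep : IndepFun V₀ V₁ P)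
    (hU₀ : P.map V₀ = volume.restrict (Set.Icc (0 : ℝ) 1))
    (hU₁ : P.map V₁ = volume.restrict (Set.Icc (0 : ℝ) 1)) :
    P.map (fun ω =>
      (cdfInv μ.fst (V₀ ω), condCDFInv μ (cdfInv μ.fst (V₀ ω)) (V₁ ω))) = μ := by
  set U := volume.restrict (Icc (0 : ℝ) 1)
  set q₀ := (cdf μ.fst).quantile
  have hq₀ : Measurable q₀ :=
    StieltjesFunction.measurable_quantile (tendsto_cdf_atBot _) (tendsto_cdf_atTop _)
  have hV : ∀ᵐ ω ∂P, V₀ ω ∈ Ioo 0 1 ∧ V₁ ω ∈ Ioo 0 1 :=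
    (ae_of_ae_map hV₀.aemeasurable (hU₀ ▸ ae_restrict_Icc_mem_Ioo 0 1)).and
      (ae_of_ae_map hV₁.aemeasurable (hU₁ ▸ ae_restrict_Icc_mem_Ioo 0 1))
  have hlaw : P.map (fun ω => (V₀ ω, V₁ ω)) = U.prod U := by
    rw [(indepFun_iff_map_prod_eq_prod_map_map hV₀.aemeasurable hV₁.aemeasurable).mp hindep,
      hU₀, hU₁]
  calc P.map (fun ω => (cdfInv μ.fst (V₀ ω), condCDFInv μ (cdfInv μ.fst (V₀ ω)) (V₁ ω)))
      = P.map (condQuantileMap μ ∘ Prod.map q₀ id ∘ fun ω => (V₀ ω, V₁ ω)) := by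
        refine Measure.map_congr ?_
        filter_upwards [hV] with ω ⟨h₀, h₁⟩
        simp [condQuantileMap, q₀, cdfInv_eq_quantile _ h₀, condCDFInv_eq_quantile _ _ h₁]
    _ = ((U.map q₀).prod (U.map id)).map (condQuantileMap μ) := by
        rw [← Measure.map_map (measurable_condQuantileMap μ) ((hq₀.prodMap measurable_id).comp
          (hV₀.prodMk hV₁)), ← Measure.map_map (hq₀.prodMap measurable_id) (hV₀.prodMk hV₁),
          hlaw, Measure.map_prod_map _ _ hq₀ measurable_id]
    _ = μ := by
        rw [Measure.map_id, StieltjesFunction.map_quantile (tendsto_cdf_atBot _)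
          (tendsto_cdf_atTop _), measure_cdf, map_prod_condQuantileMap]
end

section
/- In a d-dimensional regular vine, the conditioned sets of the edges enumerate each pair of variables exactly once: for every 2-element subset {i, j} of {0, 1, …, d−1} there exist a unique level k ∈ {0, …, d−2} and a unique edge e = {a, b} ∈ E_k whose conditioned set a ⊕ b equals {i, j}. Consequently, a d-dimensional regular vine has exactly d(d−1)/2 edges in total. -/
open scoped symmDiff

/-- Conditioned set of an (unordered) edge `{a, b}` of a vine tree: the symmetric
difference `a ∆ b = (a ∪ b) \ (a ∩ b)`. -/
noncomputable def conditionedSet {d : ℕ} : Sym2 (Finset (Fin d)) → Finset (Fin d) :=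
  Sym2.lift ⟨fun a b => a ∆ b, fun a b => symmDiff_comm a b⟩

set_option maxHeartbeats 1000000 in
/-- In a `d`-dimensional regular vine
`{(V_k, E_k)}_{k=0}^{d-2}`, the conditioned sets of the edges enumerate each pair of
variables exactly once: for every 2-element subset `s` of `{0, …, d-1}` there exist a
unique level `k ∈ {0, …, d-2}` and a unique edge `e ∈ E_k` whose conditioned set equals
`s`. Consequently, the vine has exactly `d (d-1) / 2` edges in total.

Trees are encoded as: all edges are non-diagonal pairs of vertices of the level, any two
vertices of the level are connected by a path of edges, and `|V_k| = d - k`,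
`|E_k| = d - k - 1` (so each level graph is a connected graph with one edge fewer than
vertices, i.e. a spanning tree of its vertex set). -/
theorem regular_vine_conditioned_sets_enumerate_pairs
    (d : ℕ) (hd : 2 ≤ d)
    (V : ℕ → Finset (Finset (Fin d)))
    (E : ℕ → Finset (Sym2 (Finset (Fin d))))
    -- `V 0` consists of the `d` singletons
    (hV0 : V 0 = Finset.univ.image (fun i : Fin d => ({i} : Finset (Fin d))))
    -- edges of level `k` are non-diagonal and join vertices of `V k`
    (hEmem : ∀ k ≤ d - 2, ∀ e ∈ E k, ¬ e.IsDiag ∧ ∀ a ∈ e, a ∈ V k)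
    -- each level graph `(V k, E k)` is connected
    (hconn : ∀ k ≤ d - 2, ∀ a ∈ V k, ∀ b ∈ V k,
      Relation.ReflTransGen (fun x y => s(x, y) ∈ E k) a b)
    -- `V (k+1) = {a ∪ b : {a, b} ∈ E k, |a ∪ b| = k + 2}`
    (hVsucc : ∀ k, k + 1 ≤ d - 2 →
      (V (k + 1) : Set (Finset (Fin d))) =
        {v | ∃ a b, s(a, b) ∈ E k ∧ a ∪ b = v ∧ v.card = k + 2})
    -- `|V k| = d - k` and `|E k| = d - k - 1`
    (hcardV : ∀ k ≤ d - 2, (V k).card = d - k)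
    (hcardE : ∀ k ≤ d - 2, (E k).card = d - k - 1)
    -- proximity condition: each edge `{a, b} ∈ E k` has `|a ∩ b| = k` and `|a ∆ b| = 2`
    (hprox : ∀ k ≤ d - 2, ∀ a b : Finset (Fin d), s(a, b) ∈ E k →
      (a ∩ b).card = k ∧ (a ∆ b).card = 2) :
    (∀ s : Finset (Fin d), s.card = 2 →
      ∃! p : ℕ × Sym2 (Finset (Fin d)),
        p.1 ≤ d - 2 ∧ p.2 ∈ E p.1 ∧ conditionedSet p.2 = s) ∧
    ∑ k ∈ Finset.range (d - 1), (E k).card = d * (d - 1) / 2 := by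
  classical
  -- `conditionedSet` on a constructor
  have hcond : ∀ a b : Finset (Fin d), conditionedSet s(a, b) = a ∆ b := by
    intro a b; simp [conditionedSet]
  -- the top tree has two vertices
  have hd2 : d - 2 ≤ d - 2 := le_refl _
  have hVtop : (V (d - 2)).card = 2 := by rw [hcardV (d - 2) hd2]; omega
  obtain ⟨A, B, hABne, hVAB⟩ := Finset.card_eq_two.mp hVtop
  have hA : A ∈ V (d - 2) := by rw [hVAB]; simp
  have hB : B ∈ V (d - 2) := by rw [hVAB]; simp
  -- there is an edge joining them
  have hedge : s(A, B) ∈ E (d - 2) := by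
    have hcAB := hconn (d - 2) hd2 A hA B hB
    rcases hcAB.cases_head with heq | ⟨c, hc, -⟩
    · exact absurd heq hABne
    · have h1 := hEmem (d - 2) hd2 _ hc
      have hcV : c ∈ V (d - 2) := h1.2 c (Sym2.mem_mk_right _ _)
      have hac : A ≠ c := by
        intro h; exact h1.1 (Sym2.mk_isDiag_iff.mpr h)
      rw [hVAB] at hcV
      simp only [Finset.mem_insert, Finset.mem_singleton] at hcV
      rcases hcV with rfl | rfl
      · exact absurd rfl hac
      · exact hc
  obtain ⟨hABinter, hABsymm⟩ := hprox (d - 2) hd2 A B hedge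
  -- the two top vertices cover everything
  have hABunion : A ∪ B = Finset.univ := by
    apply Finset.eq_univ_of_card
    have hdisj : Disjoint (A ∆ B) (A ∩ B) := disjoint_symmDiff_inf A B
    have hU : A ∪ B = (A ∆ B) ∪ (A ∩ B) := by
      have := symmDiff_sup_inf A B
      simpa [Finset.sup_eq_union, Finset.inf_eq_inter] using this.symm
    rw [hU, Finset.card_union_of_disjoint hdisj, hABsymm, hABinter, Fintype.card_fin]
    omega
  -- existence of an edge with prescribed conditioned set
  have hexists : ∀ i j : Fin d, i ≠ j →
      ∃ k, k ≤ d - 2 ∧ ∃ a b : Finset (Fin d), s(a, b) ∈ E k ∧ a ∆ b = {i, j} := by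
    intro i j hij
    have hpair_card : ({i, j} : Finset (Fin d)).card = 2 := by
      rw [Finset.card_insert_of_notMem (by simp [hij]), Finset.card_singleton]
    -- if some vertex contains both, take a minimal level
    have hmain : (∃ k, k ≤ d - 2 ∧ ∃ v ∈ V k, i ∈ v ∧ j ∈ v) →
        ∃ k, k ≤ d - 2 ∧ ∃ a b : Finset (Fin d), s(a, b) ∈ E k ∧ a ∆ b = {i, j} := by
      intro hex
      obtain ⟨hkle, v, hvV, hiv, hjv⟩ := Nat.find_spec hex
      rcases hk : Nat.find hex with _ | m
      · rw [hk] at hvV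
        rw [hV0] at hvV
        simp only [Finset.mem_image, Finset.mem_univ, true_and] at hvV
        obtain ⟨x, rfl⟩ := hvV
        simp only [Finset.mem_singleton] at hiv hjv
        exact absurd (hiv.trans hjv.symm) hij
      · rw [hk] at hkle hvV
        have hset := hVsucc m hkle
        have hv' : v ∈ {v : Finset (Fin d) |
            ∃ a b, s(a, b) ∈ E m ∧ a ∪ b = v ∧ v.card = m + 2} := by
          rw [← hset]; exact hvV
        obtain ⟨a, b, hab, hunion, -⟩ := hv'
        have hmle : m ≤ d - 2 := by omega
        have hnotm : ¬ (m ≤ d - 2 ∧ ∃ v ∈ V m, i ∈ v ∧ j ∈ v) :=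
          Nat.find_min hex (by rw [hk]; omega)
        have haV : a ∈ V m := (hEmem m hmle _ hab).2 a (Sym2.mem_mk_left _ _)
        have hbV : b ∈ V m := (hEmem m hmle _ hab).2 b (Sym2.mem_mk_right _ _)
        have hnota : ¬ (i ∈ a ∧ j ∈ a) := fun h => hnotm ⟨hmle, a, haV, h.1, h.2⟩
        have hnotb : ¬ (i ∈ b ∧ j ∈ b) := fun h => hnotm ⟨hmle, b, hbV, h.1, h.2⟩
        rw [← hunion] at hiv hjv
        rw [Finset.mem_union] at hiv hjv
        have hsub : ({i, j} : Finset (Fin d)) ⊆ a ∆ b := by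
          intro x hx
          rw [Finset.mem_insert, Finset.mem_singleton] at hx
          rw [Finset.mem_symmDiff]
          rcases hx with rfl | rfl <;> tauto
        have hcard2 := (hprox m hmle a b hab).2
        refine ⟨m, hmle, a, b, hab, ?_⟩
        exact (Finset.eq_of_subset_of_card_le hsub (by omega)).symm
    by_cases h1 : i ∈ A ∧ j ∈ A
    · exact hmain ⟨d - 2, hd2, A, hA, h1.1, h1.2⟩
    by_cases h2 : i ∈ B ∧ j ∈ B
    · exact hmain ⟨d - 2, hd2, B, hB, h2.1, h2.2⟩
    -- otherwise the top edge itself works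
    have hiAB : i ∈ A ∪ B := by rw [hABunion]; exact Finset.mem_univ i
    have hjAB : j ∈ A ∪ B := by rw [hABunion]; exact Finset.mem_univ j
    rw [Finset.mem_union] at hiAB hjAB
    have key : ∀ x y : Fin d, (x ∈ A ∨ x ∈ B) → (y ∈ A ∨ y ∈ B) →
        ¬ (x ∈ A ∧ y ∈ A) → ¬ (x ∈ B ∧ y ∈ B) → x ∈ A ∆ B := by
      intro x y hx hy hxy1 hxy2
      rw [Finset.mem_symmDiff]
      tauto
    have hiAB' : i ∈ A ∆ B := key i j hiAB hjAB h1 h2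
    have hjAB' : j ∈ A ∆ B :=
      key j i hjAB hiAB (fun h => h1 ⟨h.2, h.1⟩) (fun h => h2 ⟨h.2, h.1⟩)
    have hsub : ({i, j} : Finset (Fin d)) ⊆ A ∆ B := by
      intro x hx
      rw [Finset.mem_insert, Finset.mem_singleton] at hx
      rcases hx with rfl | rfl
      · exact hiAB'
      · exact hjAB'
    refine ⟨d - 2, hd2, A, B, hedge, ?_⟩
    exact (Finset.eq_of_subset_of_card_le hsub (by omega)).symm
  -- the total edge count
  have hsum : ∑ k ∈ Finset.range (d - 1), (E k).card = d * (d - 1) / 2 := by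
    have h1 : ∀ k ∈ Finset.range (d - 1), (E k).card = d - 1 - k := by
      intro k hk
      rw [Finset.mem_range] at hk
      rw [hcardE k (by omega)]
      omega
    rw [Finset.sum_congr rfl h1]
    have key : ∀ n : ℕ, 2 * ∑ k ∈ Finset.range n, (n - k) = n * (n + 1) := by
      intro n
      induction n with
      | zero => simp
      | succ m ih =>
        rw [Finset.sum_range_succ']
        have hstep : ∀ k, (m + 1 - (k + 1)) = m - k := fun k => by omega
        simp only [hstep, Nat.sub_zero]
        rw [Nat.mul_add, ih]
        ring
    have h2 := key (d - 1)
    have h3 : (d - 1) * ((d - 1) + 1) = d * (d - 1) := by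
      have hd' : (d - 1) + 1 = d := by omega
      rw [hd', Nat.mul_comm]
    rw [h3] at h2
    rw [← h2, Nat.mul_div_cancel_left _ (by norm_num : (0:ℕ) < 2)]
  -- the conditioned set of every edge has two elements
  have hcondcard : ∀ k, k ≤ d - 2 → ∀ e ∈ E k, (conditionedSet e).card = 2 := by
    intro k hk e
    induction e using Sym2.ind with
    | _ a b =>
      intro he
      rw [hcond]
      exact (hprox k hk a b he).2
  -- the finset of all (level, edge) pairs
  set g : ℕ × Sym2 (Finset (Fin d)) → Finset (Fin d) := fun p => conditionedSet p.2 with hg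
  set T : Finset (ℕ × Sym2 (Finset (Fin d))) :=
    (Finset.range (d - 1)).biUnion (fun k => (E k).image (fun e => (k, e))) with hT
  have hmemT : ∀ p : ℕ × Sym2 (Finset (Fin d)), p ∈ T ↔ p.1 ≤ d - 2 ∧ p.2 ∈ E p.1 := by
    rintro ⟨k, e⟩
    simp only [hT, Finset.mem_biUnion, Finset.mem_image, Finset.mem_range]
    constructor
    · rintro ⟨l, hl, e', he', heq⟩
      obtain ⟨h1, h2⟩ := Prod.mk.injEq _ _ _ _ ▸ heq
      subst h1; subst h2
      exact ⟨by omega, he'⟩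
    · rintro ⟨hk, he⟩
      exact ⟨k, by omega, e, he, rfl⟩
  have hcardT : T.card = d * (d - 1) / 2 := by
    rw [hT, Finset.card_biUnion]
    · rw [← hsum]
      apply Finset.sum_congr rfl
      intro k _
      exact Finset.card_image_of_injective _ (fun a b h => (Prod.ext_iff.mp h).2)
    · intro x hx y hy hxy
      simp only [Finset.disjoint_left, Finset.mem_image]
      rintro p ⟨e, he, rfl⟩ ⟨e', he', heq⟩
      exact hxy ((Prod.ext_iff.mp heq).1).symm
  have hcardP : (Finset.powersetCard 2 (Finset.univ : Finset (Fin d))).card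
      = d * (d - 1) / 2 := by
    rw [Finset.card_powersetCard, Finset.card_univ, Fintype.card_fin, Nat.choose_two_right]
  have himg : T.image g = Finset.powersetCard 2 (Finset.univ : Finset (Fin d)) := by
    apply Finset.Subset.antisymm
    · intro s hs
      rw [Finset.mem_image] at hs
      obtain ⟨p, hpT, rfl⟩ := hs
      rw [hmemT] at hpT
      rw [Finset.mem_powersetCard_univ]
      exact hcondcard p.1 hpT.1 p.2 hpT.2
    · intro s hs
      rw [Finset.mem_powersetCard_univ] at hs
      obtain ⟨i, j, hij, rfl⟩ := Finset.card_eq_two.mp hs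
      obtain ⟨k, hk, a, b, hab, habs⟩ := hexists i j hij
      rw [Finset.mem_image]
      refine ⟨(k, s(a, b)), (hmemT _).mpr ⟨hk, hab⟩, ?_⟩
      rw [hg]
      simpa [hcond] using habs
  have hinj : Set.InjOn g ↑T :=
    Finset.card_image_iff.mp (by rw [himg, hcardP, hcardT])
  refine ⟨?_, hsum⟩
  intro s hs
  obtain ⟨i, j, hij, rfl⟩ := Finset.card_eq_two.mp hs
  obtain ⟨k, hk, a, b, hab, habs⟩ := hexists i j hij
  refine ⟨(k, s(a, b)), ⟨hk, hab, by simpa [hcond] using habs⟩, ?_⟩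
  rintro ⟨k', e'⟩ ⟨hk', he', hcond'⟩
  apply hinj
  · rw [Finset.mem_coe, hmemT]; exact ⟨hk', he'⟩
  · rw [Finset.mem_coe, hmemT]; exact ⟨hk, hab⟩
  · show conditionedSet e' = conditionedSet s(a, b)
    rw [hcond', hcond]
    exact habs.symm
end
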